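/- arXiv:math/0611414 — 2 statements merged into one kernel-verified Lean document; each statement's English description precedes it below -/
import Mathlib

section
/- Let G ≤ Sₙ be a transitive permutation group acting on M = ℚⁿ, and suppose α₁,…,αₙ are pairwise distinct roots (in a splitting field) of a square-free polynomial f over F permuted by G. If the submodule M₀ = { a ∈ ℚⁿ : Σ aᵢ = 0 } is an irreducible G-module, then Λ_ℚ = { e ∈ ℚⁿ : Σᵢ eᵢαᵢ = 0 } is either 0 (when Σᵢ αᵢ ≠ 0) or the span of (1,…,1) (when Σᵢ αᵢ = 0). -/
theorem stmt_4 (F K : Type*) [Field F] [Field K] [CharZero K] [Algebra F K]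
    (n : ℕ) (f : Polynomial F) (hmonic : f.Monic) (hsq : Squarefree f)
    (hdeg : f.natDegree = n) (α : Fin n → K)
    (hsplit : f.map (algebraMap F K) = ∏ i, (Polynomial.X - Polynomial.C (α i)))
    (hinj : Function.Injective α)
    (G : Subgroup (K ≃ₐ[F] K))
    (π : (K ≃ₐ[F] K) →* Equiv.Perm (Fin n))
    (hπ : ∀ (σ : K ≃ₐ[F] K) (i : Fin n), σ (α i) = α (π σ i))
    (htrans : ∀ i j : Fin n, ∃ σ ∈ G, π σ i = j)
    (M₀ : Submodule ℚ (Fin n → ℚ))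
    (hM₀ : ∀ a : Fin n → ℚ, a ∈ M₀ ↔ ∑ i, a i = 0)
    (hirr : ∀ W : Submodule ℚ (Fin n → ℚ), W ≤ M₀ →
      (∀ σ ∈ G, ∀ a ∈ W, (fun i => a ((π σ)⁻¹ i)) ∈ W) → W = ⊥ ∨ W = M₀) :
    ((∑ i, α i) ≠ 0 → {e : Fin n → ℚ | ∑ i, (e i : K) * α i = 0} = {0}) ∧
    ((∑ i, α i) = 0 → {e : Fin n → ℚ | ∑ i, (e i : K) * α i = 0} =
      {e : Fin n → ℚ | ∃ q : ℚ, e = fun _ => q}) := by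
  classical
  set S : Set (Fin n → ℚ) := {e : Fin n → ℚ | ∑ i, (e i : K) * α i = 0} with hSdef
  have hmemS : ∀ e : Fin n → ℚ, e ∈ S ↔ ∑ i, (e i : K) * α i = 0 := fun e => Iff.rfl
  -- invariance of S under any σ
  have hSinv : ∀ (σ : K ≃ₐ[F] K), ∀ e ∈ S, (fun i => e ((π σ)⁻¹ i)) ∈ S := by
    intro σ e he
    rw [hmemS]
    have h1 : ∑ i, ((e ((π σ)⁻¹ i) : K) * α i)
        = ∑ j, (e j : K) * α ((π σ) j) := by
      rw [← Equiv.sum_comp (π σ) (fun i => (e ((π σ)⁻¹ i) : K) * α i)]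
      simp
    rw [h1]
    have h2 : ∀ j, (e j : K) * α (π σ j) = σ ((e j : K) * α j) := by
      intro j
      rw [map_mul, map_ratCast, hπ]
    simp_rw [h2]
    rw [← map_sum, (hmemS e).mp he, map_zero]
  -- the submodule W = S ∩ M₀
  let W : Submodule ℚ (Fin n → ℚ) :=
  { carrier := {a | a ∈ S ∧ ∑ i, a i = 0}
    add_mem' := by
      rintro a b ⟨ha1, ha2⟩ ⟨hb1, hb2⟩
      refine ⟨?_, ?_⟩
      · show ∑ i, (((a + b) i : ℚ) : K) * α i = 0
        have h : ∀ i, (((a + b) i : ℚ) : K) * α i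
            = (a i : K) * α i + (b i : K) * α i := by
          intro i; push_cast [Pi.add_apply]; ring
        simp_rw [h]
        rw [Finset.sum_add_distrib, (hmemS a).mp ha1, (hmemS b).mp hb1, add_zero]
      · show ∑ i, (a + b) i = 0
        simp [Finset.sum_add_distrib, ha2, hb2]
    zero_mem' := by
      refine ⟨?_, ?_⟩
      · show ∑ i, (((0 : Fin n → ℚ) i : ℚ) : K) * α i = 0
        simp
      · simp
    smul_mem' := by
      rintro c a ⟨ha1, ha2⟩
      refine ⟨?_, ?_⟩
      · show ∑ i, (((c • a) i : ℚ) : K) * α i = 0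
        have h : ∀ i, (((c • a) i : ℚ) : K) * α i = (c : K) * ((a i : K) * α i) := by
          intro i; push_cast [Pi.smul_apply, smul_eq_mul]; ring
        simp_rw [h]
        rw [← Finset.mul_sum, (hmemS a).mp ha1, mul_zero]
      · show ∑ i, (c • a) i = 0
        simp [Pi.smul_apply, ← Finset.mul_sum, ha2] }
  have hWle : W ≤ M₀ := by
    rintro a ⟨_, ha2⟩
    exact (hM₀ a).mpr ha2
  have hWinv : ∀ σ ∈ G, ∀ a ∈ W, (fun i => a ((π σ)⁻¹ i)) ∈ W := by
    rintro σ hσ a ⟨ha1, ha2⟩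
    refine ⟨hSinv σ a ha1, ?_⟩
    show ∑ i, a ((π σ)⁻¹ i) = 0
    rw [← Equiv.sum_comp (π σ) (fun i => a ((π σ)⁻¹ i))]
    simpa using ha2
  have hW := hirr W hWle hWinv
  -- key: S ∩ M₀ = 0
  have hkey : ∀ a ∈ S, (∑ i, a i = 0) → a = 0 := by
    intro a haS hasum
    have haW : a ∈ W := ⟨haS, hasum⟩
    rcases hW with h | h
    · rw [h] at haW
      simpa using haW
    · by_cases hn : 2 ≤ n
      · exfalso
        have hi : (0 : ℕ) < n := by omega
        have hj : (1 : ℕ) < n := by omega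
        set i : Fin n := ⟨0, hi⟩ with hidef
        set j : Fin n := ⟨1, hj⟩ with hjdef
        have hij : i ≠ j := by
          simp [hidef, hjdef, Fin.ext_iff]
        set b : Fin n → ℚ :=
          fun k => (if k = i then (1 : ℚ) else 0) + (if k = j then (-1 : ℚ) else 0)
          with hbdef
        have hbM : b ∈ M₀ := by
          rw [hM₀]
          simp [hbdef, Finset.sum_add_distrib, Finset.sum_ite_eq']
        have hbW : b ∈ W := by rw [h]; exact hbM
        have hbS : b ∈ S := hbW.1
        rw [hmemS] at hbS
        have hb2 : ∑ k, (b k : K) * α k = α i - α j := by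
          have h3 : ∀ k, (b k : K) * α k
              = (if k = i then α k else 0) + (if k = j then -α k else 0) := by
            intro k
            rw [hbdef]
            push_cast
            rw [add_mul]
            congr 1 <;> split <;> simp
          simp_rw [h3]
          rw [Finset.sum_add_distrib, Finset.sum_ite_eq', Finset.sum_ite_eq']
          simp [sub_eq_add_neg]
        rw [hb2] at hbS
        exact hij (hinj (sub_eq_zero.mp hbS))
      · -- n ≤ 1 : M₀ = ⊥ essentially
        have haM : a ∈ M₀ := hWle haW
        rw [hM₀] at haM
        funext k
        have hnp : 0 < n := k.pos
        have hn1 : n = 1 := by omega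
        subst hn1
        have hk0 : k = 0 := Subsingleton.elim k 0
        rw [hk0]
        simpa [Fin.sum_univ_one] using haM
  -- constancy of elements of S
  have hconst : ∀ e ∈ S, ∀ i j : Fin n, e i = e j := by
    intro e he i j
    obtain ⟨σ, hσG, hσij⟩ := htrans i j
    set d : Fin n → ℚ := fun k => e k - e ((π σ)⁻¹ k) with hddef
    have hdS : d ∈ S := by
      rw [hmemS]
      have h3 : ∀ k, (d k : K) * α k
          = (e k : K) * α k - (e ((π σ)⁻¹ k) : K) * α k := by
        intro k; rw [hddef]; push_cast; ring
      simp_rw [h3]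
      rw [Finset.sum_sub_distrib, (hmemS e).mp he,
        (hmemS _).mp (hSinv σ e he), sub_zero]
    have hdsum : ∑ k, d k = 0 := by
      rw [hddef]
      rw [Finset.sum_sub_distrib]
      rw [← Equiv.sum_comp (π σ) (fun k => e ((π σ)⁻¹ k))]
      simp
    have hd0 := hkey d hdS hdsum
    have := congrFun hd0 j
    rw [hddef] at this
    have hji : (π σ)⁻¹ j = i := by
      rw [← hσij]; simp
    simp only [hji] at this
    have : e j - e i = 0 := this
    linarith
  constructor
  · intro hα
    ext e
    simp only [Set.mem_singleton_iff]
    constructor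
    · intro he
      funext k
      have hsum : ∑ i, (e i : K) * α i = (e k : K) * ∑ i, α i := by
        rw [Finset.mul_sum]
        exact Finset.sum_congr rfl fun i _ => by rw [hconst e he i k]
      have h0 : (e k : K) * ∑ i, α i = 0 := by
        rw [← hsum]; exact (hmemS e).mp he
      rcases mul_eq_zero.mp h0 with h | h
      · exact_mod_cast h
      · exact absurd h hα
    · rintro rfl
      rw [hmemS]
      simp
  · intro hα
    ext e
    simp only [Set.mem_setOf_eq]
    constructor
    · intro he
      rcases Nat.eq_zero_or_pos n with h0 | hpos
      · subst h0
        exact ⟨0, funext fun k => k.elim0⟩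
      · exact ⟨e ⟨0, hpos⟩, funext fun k => hconst e he k ⟨0, hpos⟩⟩
    · rintro ⟨q, rfl⟩
      show ∑ i, ((q : ℚ) : K) * α i = 0
      rw [← Finset.mul_sum, hα, mul_zero]
end

section
/- Let f = x⁴ + ax³ + bx² + cx + d be an irreducible polynomial over a field F of characteristic 0 with roots α₁,…,α₄ satisfying α₁+α₂−α₃−α₄ = 0. Setting Δᵢ = Σₖ (eₖ αₖⁱ) with e = (1,1,−1,−1), one has Δ₀ = Δ₁ = 0, Δ₂ = 2α₂² + aα₂ − 2α₄² − aα₄, and 3aΔ₂ + 4Δ₃ = 0; moreover Δ₂ ≠ 0. -/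
open Polynomial in
theorem stmt_8 (F K : Type*) [Field F] [Field K] [CharZero F] [Algebra F K]
    (a b c d : F) (α₁ α₂ α₃ α₄ : K) (f : Polynomial F)
    (hf : f = X^4 + C a * X^3 + C b * X^2 + C c * X + C d)
    (hirr : Irreducible f)
    (hmap : f.map (algebraMap F K) =
      (X - C α₁) * (X - C α₂) * (X - C α₃) * (X - C α₄))
    (hrel : α₁ + α₂ - α₃ - α₄ = 0)
    (Δ : ℕ → K) (hΔ : ∀ i, Δ i = α₁^i + α₂^i - α₃^i - α₄^i) :
    Δ 0 = 0 ∧ Δ 1 = 0 ∧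
    Δ 2 = 2*α₂^2 + algebraMap F K a * α₂ - 2*α₄^2 - algebraMap F K a * α₄ ∧
    3 * algebraMap F K a * Δ 2 + 4 * Δ 3 = 0 ∧ Δ 2 ≠ 0 := by
  haveI : CharZero K := charZero_of_injective_algebraMap (algebraMap F K).injective
  have h := hmap
  rw [hf] at h
  simp only [Polynomial.map_add, Polynomial.map_mul, Polynomial.map_pow,
    Polynomial.map_X, Polynomial.map_C] at h
  have hrhs : (X - C α₁) * (X - C α₂) * (X - C α₃) * (X - C α₄) =
      X^4 + C (-(α₁+α₂+α₃+α₄)) * X^3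
      + C (α₁*α₂+α₁*α₃+α₁*α₄+α₂*α₃+α₂*α₄+α₃*α₄) * X^2
      + C (-(α₁*α₂*α₃+α₁*α₂*α₄+α₁*α₃*α₄+α₂*α₃*α₄)) * X
      + C (α₁*α₂*α₃*α₄) := by
    simp only [C_add, C_mul, C_neg]
    ring
  rw [hrhs] at h
  have e3 : algebraMap F K a = -(α₁+α₂+α₃+α₄) := by
    have h3 := congrArg (fun p => Polynomial.coeff p 3) h
    simp only [coeff_add, coeff_C_mul, coeff_X_pow, coeff_X, coeff_C] at h3
    norm_num at h3
    linear_combination h3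
  have e2 : algebraMap F K b =
      α₁*α₂+α₁*α₃+α₁*α₄+α₂*α₃+α₂*α₄+α₃*α₄ := by
    have h2 := congrArg (fun p => Polynomial.coeff p 2) h
    simp only [coeff_add, coeff_C_mul, coeff_X_pow, coeff_X, coeff_C] at h2
    norm_num at h2
    linear_combination h2
  have hα1 : α₁ = α₃ + α₄ - α₂ := by linear_combination hrel
  subst hα1
  have hA2 : algebraMap F K a = -(2*(α₃+α₄)) := by linear_combination e3
  refine ⟨by simp [hΔ], by rw [hΔ]; ring, ?_, ?_, ?_⟩
  · rw [hΔ]; linear_combination (α₄ - α₂) * hA2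
  · rw [hΔ, hΔ]
    linear_combination (3*((α₃+α₄-α₂)^2+α₂^2-α₃^2-α₄^2)) * hA2
  · intro h0
    rw [hΔ] at h0
    have hp : (α₃+α₄-α₂)*α₂ = α₃*α₄ :=
      mul_left_cancel₀ (two_ne_zero (α := K)) (by linear_combination -h0)
    have h8 : (8:K) ≠ 0 := by norm_num
    have hm8 : algebraMap F K (b/2 - a^2/8) * 8
        = algebraMap F K b * 4 - algebraMap F K a ^ 2 := by
      have hF : (b/2 - a^2/8) * 8 = b*4 - a^2 := by field_simp; ring
      calc algebraMap F K (b/2 - a^2/8) * 8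
          = algebraMap F K ((b/2 - a^2/8) * 8) := by
            rw [map_mul, map_ofNat]
        _ = algebraMap F K (b*4 - a^2) := by rw [hF]
        _ = algebraMap F K b * 4 - algebraMap F K a ^ 2 := by
            rw [map_sub, map_mul, map_ofNat, map_pow]
    have hpv : (α₃+α₄-α₂)*α₂ = algebraMap F K (b/2 - a^2/8) := by
      apply mul_right_cancel₀ h8
      rw [hm8]
      linear_combination (-4)*e2 + 4*hp
        + (algebraMap F K a - 2*(α₃+α₄))*hA2
    have h2a : (2:K) * algebraMap F K (a/2) = algebraMap F K a := by
      rw [show (2:K) = algebraMap F K 2 from (map_ofNat _ 2).symm, ← map_mul,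
        show (2:F)*(a/2) = a from by field_simp]
    have h_half : algebraMap F K (a/2) = -(α₃+α₄) :=
      mul_left_cancel₀ (two_ne_zero (α := K)) (by rw [h2a]; linear_combination hA2)
    set g : Polynomial F := X^2 + C (a/2) * X + C (b/2 - a^2/8) with hg
    have hgmap : g.map (algebraMap F K) =
        (X - C (α₃+α₄-α₂)) * (X - C α₂) := by
      rw [hg]
      simp only [Polynomial.map_add, Polynomial.map_mul, Polynomial.map_pow,
        Polynomial.map_X, Polynomial.map_C]
      rw [h_half, ← hpv]
      rw [show (-(α₃+α₄) : K) = -((α₃+α₄-α₂) + α₂) by ring, C_neg, C_add, C_mul]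
      ring
    have hfg : f = g * g := by
      apply Polynomial.map_injective (algebraMap F K) (algebraMap F K).injective
      rw [Polynomial.map_mul, hgmap, hmap]
      have d1 : (C α₃ + C α₄ : Polynomial K) = C (α₃+α₄-α₂) + C α₂ := by
        rw [← C_add, ← C_add]; congr 1; ring
      have d2 : (C α₃ * C α₄ : Polynomial K) = C (α₃+α₄-α₂) * C α₂ := by
        rw [← C_mul, ← C_mul]; congr 1; linear_combination -hp
      have c3 : (X - C α₃) * (X - C α₄) =
          (X - C (α₃+α₄-α₂)) * (X - C α₂) := by
        linear_combination (-X) * d1 + d2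
      calc (X - C (α₃+α₄-α₂)) * (X - C α₂) * (X - C α₃) * (X - C α₄)
          = ((X - C (α₃+α₄-α₂)) * (X - C α₂)) * ((X - C α₃) * (X - C α₄)) := by
            ring
        _ = ((X - C (α₃+α₄-α₂)) * (X - C α₂)) * ((X - C (α₃+α₄-α₂)) * (X - C α₂)) := by
            rw [c3]
    have hgu : ¬ IsUnit g := by
      intro hu
      have hdeg : g.natDegree = 2 := by
        rw [hg]; compute_degree!
      have := Polynomial.natDegree_eq_zero_of_isUnit hu
      omega
    rcases hirr.isUnit_or_isUnit hfg with hu | hu <;> exact hgu hu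
end
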